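/- Pieri-coefficient theta identity (combinatorial core of the level-(0,1) action). Fix a partition λ with length ℓ = ℓ(λ), and set u_i = q^{λ_i} t^{−i+1} u (1 ≤ i ≤ ℓ+1, with λ_{ℓ+1} = 0) for an indeterminate u. Define A^+_{λ,i}(p) = Π_{j=1}^{i−1} θ_p(t u_i/u_j) θ_p(q t^{-1} u_i/u_j) / (θ_p(q u_i/u_j) θ_p(u_i/u_j)) and A^−_{λ,i}(p) = Π_{j=i+1}^{ℓ} θ_p(q t^{-1} u_j/u_i)/θ_p(u_j/u_i) · Π_{j=i+1}^{ℓ+1} θ_p(t u_j/u_i)/θ_p(q u_j/u_i). Then for each i with λ − 1_i a partition (i.e. λ_i > λ_{i+1}): A^−_{λ,i}(p) · A^+_{λ−1_i, i}(p) = (t/q) · Π_{j≠i, 1≤j≤ℓ} θ_p(t u_i/(q u_j)) / θ_p(u_i/u_j) · Π_{j≠i, 1≤j≤ℓ+1} θ_p(u_i/(t u_j)) / θ_p(u_i/(q u_j)). -/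

import Mathlib

open Finset Complex

/-- `(z;p)_∞ = Π_{n≥0}(1 − z p^n)`. -/
noncomputable def qPoch (z p : ℂ) : ℂ := ∏' n : ℕ, (1 - z * p ^ n)

/-- Jacobi's odd theta function `θ_p(z) = (z;p)_∞ (p/z;p)_∞`. -/
noncomputable def theta (p z : ℂ) : ℂ := qPoch z p * qPoch (p / z) p

/-! Since `v_i = u_i / q` and `v_j = u_j` otherwise, the `j`-th factor of `A^+_{λ−1_i,i}` is the
product of the `j`-th factors of the two right-hand products. For `j > i`, the inversion
`θ_p(1/z) = −z⁻¹ θ_p(z)` turns those two right-hand factors into `t/q` resp. `q/t` times the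
corresponding factors of `A^−_{λ,i}`; the second product has one factor more, which absorbs the
prefactor `t/q`. -/

section Theta

variable {p : ℂ}

lemma multipliable_one_sub_mul_pow (hp : ‖p‖ < 1) (w : ℂ) :
    Multipliable fun n : ℕ => 1 - w * p ^ n := by
  simpa only [sub_eq_add_neg] using
    Complex.multipliable_one_add_of_summable ((summable_geometric_of_norm_lt_one hp).mul_left w).neg

lemma qPoch_eq_one_sub_mul_qPoch (hp : ‖p‖ < 1) (w : ℂ) :
    qPoch w p = (1 - w) * qPoch (w * p) p := by
  have hshift : Multipliable fun n : ℕ => 1 - w * p ^ (n + 1) := by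
    simpa only [pow_succ', mul_assoc] using multipliable_one_sub_mul_pow hp (w * p)
  unfold qPoch
  rw [tprod_eq_zero_mul' (f := fun n => 1 - w * p ^ n) hshift, pow_zero, mul_one]
  congr 1
  exact tprod_congr fun n => by ring

lemma theta_inv (hp : ‖p‖ < 1) {z : ℂ} (hz : z ≠ 0) :
    theta p z⁻¹ = -z⁻¹ * theta p z := by
  rw [theta, theta, qPoch_eq_one_sub_mul_qPoch hp z⁻¹, qPoch_eq_one_sub_mul_qPoch hp z,
    div_inv_eq_mul, inv_mul_eq_div, mul_comm z p]
  field_simp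
  ring

lemma theta_inv_div_theta_inv (hp : ‖p‖ < 1) {x y : ℂ} (hx : x ≠ 0) (hy : y ≠ 0) :
    theta p x⁻¹ / theta p y⁻¹ = y / x * (theta p x / theta p y) := by
  rw [theta_inv hp hx, theta_inv hp hy, mul_div_mul_comm, neg_div_neg_eq, inv_div_inv]

end Theta

lemma prod_Icc_erase_eq_mul {M : Type*} [CommMonoid M] (f : ℕ → M) {i n : ℕ} (hi : i ≤ n + 1) :
    ∏ j ∈ (Icc 1 n).erase i, f j = (∏ j ∈ Icc 1 (i - 1), f j) * ∏ j ∈ Icc (i + 1) n, f j := by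
  rw [← prod_union (disjoint_left.2 fun x hx hx' => by simp only [mem_Icc] at hx hx'; omega)]
  congr 1
  ext x
  simp only [mem_erase, mem_Icc, mem_union]
  omega

lemma pieri_theta_identity_of_shift {p q t : ℂ} (hp : ‖p‖ < 1) (hq : q ≠ 0) (ht : t ≠ 0)
    {U V : ℕ → ℂ} (hU : ∀ k, U k ≠ 0) {i ℓ : ℕ} (hi : i ≤ ℓ)
    (hVi : V i = U i / q) (hV : ∀ j, j ≠ i → V j = U j) :
    ((∏ j ∈ Icc (i + 1) ℓ, theta p (q * t⁻¹ * U j / U i) / theta p (U j / U i))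
        * ∏ j ∈ Icc (i + 1) (ℓ + 1), theta p (t * U j / U i) / theta p (q * U j / U i))
      * ∏ j ∈ Icc 1 (i - 1),
          theta p (t * V i / V j) * theta p (q * t⁻¹ * V i / V j)
            / (theta p (q * V i / V j) * theta p (V i / V j))
    = (t / q)
        * (∏ j ∈ (Icc 1 ℓ).erase i, theta p (t * U i / (q * U j)) / theta p (U i / U j))
        * ∏ j ∈ (Icc 1 (ℓ + 1)).erase i, theta p (U i / (t * U j)) / theta p (U i / (q * U j)) := by
  set a := fun j => theta p (q * t⁻¹ * U j / U i) / theta p (U j / U i)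
  set b := fun j => theta p (t * U j / U i) / theta p (q * U j / U i)
  set f := fun j => theta p (t * U i / (q * U j)) / theta p (U i / U j)
  set g := fun j => theta p (U i / (t * U j)) / theta p (U i / (q * U j))
  have hf : ∀ j, f j = t / q * a j := fun j => by
    simp only [f, a]
    rw [← inv_div (U j), show t * U i / (q * U j) = (q * t⁻¹ * U j / U i)⁻¹ by field_simp [hU],
      theta_inv_div_theta_inv hp (by simp [*]) (by simp [*])]
    congr 1
    field_simp [hU]
  have hg : ∀ j, g j = q / t * b j := fun j => by
    simp only [g, b]
    rw [← inv_div (t * U j), ← inv_div (q * U j),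
      theta_inv_div_theta_inv hp (by simp [*]) (by simp [*])]
    congr 1
    field_simp [hU]
  have hA_plus : ∏ j ∈ Icc 1 (i - 1),
      theta p (t * V i / V j) * theta p (q * t⁻¹ * V i / V j)
        / (theta p (q * V i / V j) * theta p (V i / V j))
      = (∏ j ∈ Icc 1 (i - 1), f j) * ∏ j ∈ Icc 1 (i - 1), g j := by
    rw [← prod_mul_distrib]
    refine prod_congr rfl fun j hj => ?_
    rw [hV j (by simp only [mem_Icc] at hj; omega), hVi, div_mul_div_comm]
    congr 2 <;> field_simp
  have hf_prod : ∏ j ∈ Icc (i + 1) ℓ, f j = (t / q) ^ (ℓ - i) * ∏ j ∈ Icc (i + 1) ℓ, a j := by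
    rw [prod_congr rfl fun j _ => hf j, prod_mul_distrib, prod_const, Nat.card_Icc,
      Nat.add_sub_add_right]
  have hg_prod : ∏ j ∈ Icc (i + 1) (ℓ + 1), g j
      = (q / t) ^ (ℓ - i + 1) * ∏ j ∈ Icc (i + 1) (ℓ + 1), b j := by
    rw [prod_congr rfl fun j _ => hg j, prod_mul_distrib, prod_const, Nat.card_Icc]
    congr 2
    omega
  rw [hA_plus, prod_Icc_erase_eq_mul f (by omega), prod_Icc_erase_eq_mul g (by omega), hf_prod,
    hg_prod, ← inv_div t q, inv_pow, pow_succ]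
  field_simp

theorem pieri_theta_identity_general (p q t u : ℂ) (hp : ‖p‖ < 1)
    (hq : q ≠ 0) (ht : t ≠ 0) (hu : u ≠ 0)
    (ℓ : ℕ) (lam : ℕ → ℕ)
    (i : ℕ) (hi2 : i ≤ ℓ) (hrem : lam i < lam (i - 1)) :
    (fun (uu vv : ℕ → ℂ) =>
      ((∏ j ∈ Finset.Icc (i + 1) ℓ, theta p (q * t⁻¹ * uu j / uu i) / theta p (uu j / uu i))
          * ∏ j ∈ Finset.Icc (i + 1) (ℓ + 1), theta p (t * uu j / uu i) / theta p (q * uu j / uu i))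
        * ∏ j ∈ Finset.Icc 1 (i - 1),
            theta p (t * vv i / vv j) * theta p (q * t⁻¹ * vv i / vv j)
              / (theta p (q * vv i / vv j) * theta p (vv i / vv j))
      = (t / q)
          * (∏ j ∈ (Finset.Icc 1 ℓ).erase i, theta p (t * uu i / (q * uu j)) / theta p (uu i / uu j))
          * ∏ j ∈ (Finset.Icc 1 (ℓ + 1)).erase i, theta p (uu i / (t * uu j)) / theta p (uu i / (q * uu j)))
      (fun k => q ^ (lam (k - 1)) * t ^ (1 - (k : ℤ)) * u)
      (fun k => q ^ (if k = i then lam (k - 1) - 1 else lam (k - 1)) * t ^ (1 - (k : ℤ)) * u) := by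
  set U : ℕ → ℂ := fun k => q ^ (lam (k - 1)) * t ^ (1 - (k : ℤ)) * u
  set V : ℕ → ℂ :=
    fun k => q ^ (if k = i then lam (k - 1) - 1 else lam (k - 1)) * t ^ (1 - (k : ℤ)) * u
  have hVi : V i = U i / q := by
    rw [eq_div_iff hq]
    simp only [U, V, if_true]
    rw [mul_right_comm, mul_right_comm _ _ q, ← pow_succ, Nat.sub_add_cancel (by omega)]
  exact pieri_theta_identity_of_shift hp hq ht (fun k => by simp [U, zpow_ne_zero, *]) hi2 hVi
    fun j hj => by simp [U, V, hj]

/-- Pieri-coefficient theta identity: with `u_k = q^{λ_k} t^{−k+1} u` (1-indexed,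
`λ_{ℓ+1} = 0`) and, for `λ − 1_i`, `v_k = q^{(λ−1_i)_k} t^{−k+1} u`,
`A^−_{λ,i}(p) = Π_{j=i+1}^{ℓ} θ_p(q t⁻¹ u_j/u_i)/θ_p(u_j/u_i)
               · Π_{j=i+1}^{ℓ+1} θ_p(t u_j/u_i)/θ_p(q u_j/u_i)`,
`A^+_{λ−1_i,i}(p) = Π_{j=1}^{i−1} θ_p(t v_i/v_j) θ_p(q t⁻¹ v_i/v_j)
                      /(θ_p(q v_i/v_j) θ_p(v_i/v_j))`;
then for `1 ≤ i ≤ ℓ` with `λ_i > λ_{i+1}`: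
`A^−_{λ,i}(p)·A^+_{λ−1_i,i}(p) = (t/q)·Π_{j≠i,1≤j≤ℓ} θ_p(t u_i/(q u_j))/θ_p(u_i/u_j)
  · Π_{j≠i,1≤j≤ℓ+1} θ_p(u_i/(t u_j))/θ_p(u_i/(q u_j))`. -/
theorem pieri_theta_identity (p q t u : ℂ) (hp : ‖p‖ < 1) (hp0 : p ≠ 0)
    (hq : q ≠ 0) (ht : t ≠ 0) (hu : u ≠ 0)
    (hgen : ∀ a b c : ℤ, b ≠ 0 → q ^ a * t ^ b * p ^ c ≠ 1)
    (ℓ : ℕ) (lam : ℕ → ℕ)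
    (hanti : ∀ k, lam (k + 1) ≤ lam k)
    (hlen : ∀ k, ℓ ≤ k → lam k = 0)
    (hpos : ∀ k, k < ℓ → 0 < lam k)
    (i : ℕ) (hi1 : 1 ≤ i) (hi2 : i ≤ ℓ) (hrem : lam i < lam (i - 1)) :
    (fun (uu vv : ℕ → ℂ) =>
      ((∏ j ∈ Finset.Icc (i + 1) ℓ, theta p (q * t⁻¹ * uu j / uu i) / theta p (uu j / uu i))
          * ∏ j ∈ Finset.Icc (i + 1) (ℓ + 1), theta p (t * uu j / uu i) / theta p (q * uu j / uu i))
        * ∏ j ∈ Finset.Icc 1 (i - 1),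
            theta p (t * vv i / vv j) * theta p (q * t⁻¹ * vv i / vv j)
              / (theta p (q * vv i / vv j) * theta p (vv i / vv j))
      = (t / q)
          * (∏ j ∈ (Finset.Icc 1 ℓ).erase i, theta p (t * uu i / (q * uu j)) / theta p (uu i / uu j))
          * ∏ j ∈ (Finset.Icc 1 (ℓ + 1)).erase i, theta p (uu i / (t * uu j)) / theta p (uu i / (q * uu j)))
      (fun k => q ^ (lam (k - 1)) * t ^ (1 - (k : ℤ)) * u)
      (fun k => q ^ (if k = i then lam (k - 1) - 1 else lam (k - 1)) * t ^ (1 - (k : ℤ)) * u) :=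
  pieri_theta_identity_general p q t u hp hq ht hu ℓ lam i hi2 hrem
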